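/- arXiv:1303.2424 — 8 statements merged into one kernel-verified Lean document; each statement's English description precedes it below -/
import Mathlib

section
/- Let A be a commutative topological algebra over ℂ with a continuous involution making it a star algebra, let B be a unital C*-algebra, and let φ : A → B be a continuous unital star algebra homomorphism whose range is dense in B. Let s : A → ℂ be a continuous star character of A (a continuous unital ℂ-algebra homomorphism with s(a*) = conj(s(a))) such that s ≠ t∘φ for every character t of B (i.e. for every continuous unital ℂ-algebra homomorphism t : B → ℂ). Then the closure of φ(ker s) is all of B: closure { φ(a) : a ∈ A, s(a) = 0 } = B. -/
/-!
Density of `φ` makes `B` commutative and makes `closure (φ (ker s))` an ideal of `B`. If this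
ideal were proper, it would lie in a maximal ideal, hence (Gelfand–Mazur) in the kernel of a
character `t` of `B`. Then `ker s ⊆ ker (t ∘ φ)`, and two characters of `A` with nested kernels
coincide, so `s = t ∘ φ`, contrary to the hypothesis.
-/

open WeakDual

theorem mul_comm_of_denseRange {M N F : Type*} [CommMagma M] [Mul N] [TopologicalSpace N]
    [ContinuousMul N] [T2Space N] [FunLike F M N] [MulHomClass F M N] (f : F)
    (hf : DenseRange f) (x y : N) : x * y = y * x := by
  have h : (fun p : N × N => p.1 * p.2) = fun p => p.2 * p.1 :=
    (hf.prodMap hf).equalizer (continuous_fst.mul continuous_snd)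
      (continuous_snd.mul continuous_fst) <| funext fun p => by
        simp only [Function.comp_apply, Prod.map_fst, Prod.map_snd, ← map_mul, mul_comm]
  exact congrFun h (x, y)

def Ideal.closureImage {R S : Type*} [Ring R] [Ring S] [TopologicalSpace S] [IsTopologicalRing S]
    (f : R →+* S) (hf : DenseRange f) (I : Ideal R) : Ideal S where
  __ := (I.toAddSubgroup.map f.toAddMonoidHom).topologicalClosure
  smul_mem' b x hx := by
    have hmaps : Set.MapsTo (fun p : S × S => p.1 * p.2) (Set.range f ×ˢ (f '' I)) (f '' I) := by
      rintro ⟨_, _⟩ ⟨⟨r, rfl⟩, ⟨i, hi, rfl⟩⟩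
      exact ⟨r * i, I.mul_mem_left r hi, map_mul f r i⟩
    have := hmaps.closure continuous_mul
    rw [closure_prod_eq, hf.closure_range] at this
    exact this (show (b, x) ∈ Set.univ ×ˢ closure (f '' I) from ⟨trivial, hx⟩)

theorem WeakDual.CharacterSpace.exists_forall_apply_eq_zero_of_ne_top {B : Type*}
    [NormedCommRing B] [NormedAlgebra ℂ B] [CompleteSpace B] {I : Ideal B} (hI : I ≠ ⊤) :
    ∃ t : characterSpace ℂ B, ∀ x ∈ I, t x = 0 := by
  obtain ⟨M, hM, hIM⟩ := I.exists_le_maximal hI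
  exact ⟨M.toCharacterSpace, fun x hx => M.toCharacterSpace_apply_eq_zero_of_mem (hIM hx)⟩

theorem AlgHom.eq_of_ker_le {R A : Type*} [CommRing R] [Ring A] [Algebra R A] {f g : A →ₐ[R] R}
    (h : RingHom.ker f ≤ RingHom.ker g) : f = g := by
  ext a
  have hker : a - algebraMap R A (f a) ∈ RingHom.ker f := by simp [RingHom.mem_ker]
  have hg := RingHom.mem_ker.mp (h hker)
  rw [map_sub, AlgHom.commutes, Algebra.algebraMap_self, RingHom.id_apply, sub_eq_zero] at hg
  exact hg.symm

theorem stmt4_general {A B : Type*} [CommRing A] [Algebra ℂ A] [StarRing A]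
    [NormedRing B] [StarRing B] [NormedAlgebra ℂ B] [CompleteSpace B]
    (φ : A →⋆ₐ[ℂ] B) (hdense : DenseRange ⇑φ)
    (s : A →⋆ₐ[ℂ] ℂ)
    (hsep : ∀ t : B →ₐ[ℂ] ℂ, Continuous t → ∃ a : A, s a ≠ t (φ a)) :
    closure (⇑φ '' {a : A | s a = 0}) = Set.univ := by
  have hcomm : ∀ x y : B, x * y = y * x := mul_comm_of_denseRange φ hdense
  let _ : NormedCommRing B := { ‹NormedRing B› with mul_comm := hcomm }
  let J := (RingHom.ker s).closureImage (φ : A →+* B) hdense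
  suffices hJ : J = ⊤ from congrArg SetLike.coe hJ
  by_contra hJ
  obtain ⟨t, ht⟩ := CharacterSpace.exists_forall_apply_eq_zero_of_ne_top hJ
  obtain ⟨a, ha⟩ := hsep (CharacterSpace.equivAlgHom t) (map_continuous t)
  have hker : RingHom.ker s.toAlgHom ≤
      RingHom.ker ((CharacterSpace.equivAlgHom t).comp φ.toAlgHom) :=
    fun x hx => ht (φ x) (subset_closure ⟨x, hx, rfl⟩)
  exact ha (DFunLike.congr_fun (AlgHom.eq_of_ker_le hker) a)

/-- Let `A` be a commutative topological star algebra over ℂ, `B` a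
unital C*-algebra, `φ : A → B` a continuous unital star algebra homomorphism with dense
range, and `s` a continuous star character of `A` which is not of the form `t ∘ φ` for
any character `t` of `B`. Then `closure (φ(ker s)) = B`. -/
theorem stmt4 {A B : Type*} [CommRing A] [Algebra ℂ A] [StarRing A] [StarModule ℂ A]
    [TopologicalSpace A] [IsTopologicalAddGroup A] [ContinuousSMul ℂ A] [ContinuousStar A]
    (hA : ∀ a : A, Continuous fun x => a * x)
    [NormedRing B] [StarRing B] [CStarRing B] [NormedAlgebra ℂ B] [CompleteSpace B]
    [StarModule ℂ B]
    (φ : A →⋆ₐ[ℂ] B) (hφ : Continuous φ) (hdense : DenseRange ⇑φ)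
    (s : A →⋆ₐ[ℂ] ℂ) (hs : Continuous s)
    (hsep : ∀ t : B →ₐ[ℂ] ℂ, Continuous t → ∃ a : A, s a ≠ t (φ a)) :
    closure (⇑φ '' {a : A | s a = 0}) = Set.univ :=
  stmt4_general φ hdense s hsep
end

section
/- Let A be a topological algebra over ℂ and let X be a topological A-module (a topological ℂ-vector space with an A-module action a • v that is separately continuous). Fix x ∈ X, a natural number n, and a continuous seminorm p : X → ℝ. For a continuous unital ℂ-algebra homomorphism t : A → ℂ let I_t = ker t, and let I_t^{n+1}·X denote the linear span of { (a₁·…·a_{n+1}) • v : a₁,…,a_{n+1} ∈ I_t, v ∈ X }. Then the function t ↦ inf { p(x + y) : y ∈ I_t^{n+1}·X }, defined on the set of continuous unital ℂ-algebra homomorphisms A → ℂ endowed with the topology of pointwise convergence, is upper semicontinuous. -/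
/-!
Every generator `(a₁⋯a_{n+1}) • v` of `I_{t₀}^{n+1}·X` is the value at `t₀` of the family
`t ↦ ((a₁ - t a₁)⋯(a_{n+1} - t a_{n+1})) • v`, which lies in `I_t^{n+1}·X` for every `t` and
depends continuously on `t`: multiplying on the right by `a - t a` only needs continuity of
right multiplication and of scalar multiplication. Taking linear combinations, every
`y₀ ∈ I_{t₀}^{n+1}·X` extends to a continuous section `t ↦ Y t ∈ I_t^{n+1}·X`, so
`p (x + Y t) < ε` near `t₀` as soon as `p (x + y₀) < ε`.
-/

open WeakDual

theorem upperSemicontinuous_iInf_of_exists_continuous_selection {T X : Type*}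
    [TopologicalSpace T] [TopologicalSpace X] {S : T → Set X} {g : X → ℝ}
    (hg : Continuous g) (hbdd : BddBelow (Set.range g)) (hne : ∀ t, (S t).Nonempty)
    (hS : ∀ t₀, ∀ y₀ ∈ S t₀, ∃ Y : T → X, Continuous Y ∧ Y t₀ = y₀ ∧ ∀ t, Y t ∈ S t) :
    UpperSemicontinuous fun t => ⨅ y : S t, g y := by
  intro t₀ ε hε
  have : Nonempty (S t₀) := (hne t₀).to_subtype
  obtain ⟨⟨y₀, hy₀⟩, hgy₀⟩ := exists_lt_of_ciInf_lt hε
  obtain ⟨Y, hY, rfl, hYS⟩ := hS t₀ y₀ hy₀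
  filter_upwards [(hg.comp hY).continuousAt.eventually_lt continuousAt_const hgy₀] with t ht
  exact (ciInf_le (hbdd.mono (Set.range_comp_subset_range _ g)) (⟨Y t, hYS t⟩ : S t)).trans_lt ht

theorem Submodule.exists_continuous_mem_span {R X T : Type*} [Semiring R] [AddCommMonoid X]
    [Module R X] [TopologicalSpace X] [ContinuousAdd X] [ContinuousConstSMul R X]
    [TopologicalSpace T] {S : T → Set X} {t₀ : T}
    (hS : ∀ w ∈ S t₀, ∃ Y : T → X, Continuous Y ∧ Y t₀ = w ∧ ∀ t, Y t ∈ span R (S t))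
    {y₀ : X} (hy₀ : y₀ ∈ span R (S t₀)) :
    ∃ Y : T → X, Continuous Y ∧ Y t₀ = y₀ ∧ ∀ t, Y t ∈ span R (S t) := by
  induction hy₀ using Submodule.span_induction with
  | mem w hw => exact hS w hw
  | zero => exact ⟨0, continuous_const, rfl, fun t => zero_mem _⟩
  | add _ _ _ _ h₁ h₂ =>
    obtain ⟨Y₁, hY₁, rfl, hY₁S⟩ := h₁
    obtain ⟨Y₂, hY₂, rfl, hY₂S⟩ := h₂
    exact ⟨Y₁ + Y₂, hY₁.add hY₂, rfl, fun t => add_mem (hY₁S t) (hY₂S t)⟩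
  | smul c _ _ h =>
    obtain ⟨Y, hY, rfl, hYS⟩ := h
    exact ⟨c • Y, hY.const_smul c, rfl, fun t => smul_mem _ c (hYS t)⟩

theorem continuous_list_prod_ofFn_sub_algebraMap {𝕜 A T : Type*} [CommRing 𝕜]
    [TopologicalSpace 𝕜] [Ring A] [Algebra 𝕜 A] [TopologicalSpace A] [ContinuousSub A]
    [ContinuousSMul 𝕜 A] [TopologicalSpace T] (hmul : ∀ a : A, Continuous fun x => x * a) :
    ∀ {m : ℕ} (a : Fin m → A) {c : Fin m → T → 𝕜}, (∀ i, Continuous (c i)) →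
      Continuous fun t => (List.ofFn fun i => a i - algebraMap 𝕜 A (c i t)).prod
  | 0, _, _, _ => by simpa using continuous_const
  | m + 1, a, c, hc => by
    have hinit := continuous_list_prod_ofFn_sub_algebraMap hmul (fun i => a i.castSucc)
      fun i => hc i.castSucc
    simp only [List.ofFn_succ', List.prod_concat, mul_sub, ← Algebra.commutes,
      ← Algebra.smul_def]
    exact ((hmul _).comp hinit).sub ((hc _).smul hinit)

namespace WeakDual.CharacterSpace

variable {A : Type*} [Ring A] [Algebra ℂ A] [TopologicalSpace A]

def kerPowSMulGenerators (X : Type*) [AddCommGroup X] [Module A X]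
    (t : characterSpace ℂ A) (m : ℕ) : Set X :=
  {w | ∃ (a : Fin m → A) (v : X), (∀ i, t (a i) = 0) ∧ w = (List.ofFn a).prod • v}

theorem continuous_apply (a : A) : Continuous fun t : characterSpace ℂ A => t a :=
  (eval_continuous a).comp continuous_subtype_val

theorem apply_sub_algebraMap_apply (t : characterSpace ℂ A) (a : A) :
    t (a - algebraMap ℂ A (t a)) = 0 := by
  rw [map_sub, AlgHomClass.commutes, Algebra.algebraMap_self_apply, sub_self]

theorem exists_continuous_mem_kerPowSMulGenerators [ContinuousSub A]
    [ContinuousSMul ℂ A] (hmul : ∀ a : A, Continuous fun x => x * a)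
    {X : Type*} [AddCommGroup X] [Module A X] [TopologicalSpace X]
    (hsmul : ∀ v : X, Continuous fun a : A => a • v) {m : ℕ} {t₀ : characterSpace ℂ A}
    {w : X} (hw : w ∈ kerPowSMulGenerators X t₀ m) :
    ∃ Y : characterSpace ℂ A → X,
      Continuous Y ∧ Y t₀ = w ∧ ∀ t, Y t ∈ kerPowSMulGenerators X t m := by
  obtain ⟨a, v, ha, rfl⟩ := hw
  refine ⟨fun t => (List.ofFn fun i => a i - algebraMap ℂ A (t (a i))).prod • v,
    (hsmul v).comp
      (continuous_list_prod_ofFn_sub_algebraMap hmul a fun i => continuous_apply (a i)),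
    by simp only [ha, map_zero, sub_zero],
    fun t => ⟨_, v, fun i => apply_sub_algebraMap_apply t (a i), rfl⟩⟩

end WeakDual.CharacterSpace

open WeakDual.CharacterSpace in
theorem stmt6_general {A X : Type*} [Ring A] [Algebra ℂ A] [TopologicalSpace A]
    [IsTopologicalAddGroup A] [ContinuousSMul ℂ A]
    (hA₂ : ∀ a : A, Continuous fun x => x * a)
    [AddCommGroup X] [Module ℂ X] [Module A X]
    [TopologicalSpace X] [IsTopologicalAddGroup X] [ContinuousSMul ℂ X]
    (hX₂ : ∀ v : X, Continuous fun a : A => a • v)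
    (x : X) (n : ℕ) (p : Seminorm ℂ X) (hp : Continuous fun v => p v) :
    UpperSemicontinuous (fun t : characterSpace ℂ A =>
      ⨅ y : ↥(Submodule.span ℂ {w : X | ∃ (a : Fin (n + 1) → A) (v : X),
          (∀ i, t (a i) = 0) ∧ w = (List.ofFn a).prod • v}),
        p (x + (y : X))) := by
  refine upperSemicontinuous_iInf_of_exists_continuous_selection
    (S := fun t => (Submodule.span ℂ (kerPowSMulGenerators X t (n + 1)) : Set X))
    (hp.comp (continuous_const.add continuous_id)) ⟨0, ?_⟩ (fun _ => ⟨0, zero_mem _⟩)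
    fun _ _ hy₀ => Submodule.exists_continuous_mem_span (fun w hw => ?_) hy₀
  · rintro _ ⟨v, rfl⟩
    exact apply_nonneg p _
  · obtain ⟨Y, hY, hY₀, hYS⟩ := exists_continuous_mem_kerPowSMulGenerators hA₂ hX₂ hw
    exact ⟨Y, hY, hY₀, fun t => Submodule.subset_span (hYS t)⟩

/-- Let `A` be a topological algebra over ℂ and `X` a topological
`A`-module. For `x ∈ X`, `n ∈ ℕ` and a continuous seminorm `p` on `X`, the function
`t ↦ inf { p(x + y) : y ∈ I_t^{n+1}·X }` is upper semicontinuous on the character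
space of `A` (with the topology of pointwise convergence), where `I_t = ker t` and
`I_t^{n+1}·X` is the linear span of `{ (a₁⋯a_{n+1}) • v : aᵢ ∈ I_t, v ∈ X }`. -/
theorem stmt6 {A X : Type*} [Ring A] [Algebra ℂ A] [TopologicalSpace A]
    [IsTopologicalAddGroup A] [ContinuousSMul ℂ A]
    (hA₁ : ∀ a : A, Continuous fun x => a * x)
    (hA₂ : ∀ a : A, Continuous fun x => x * a)
    [AddCommGroup X] [Module ℂ X] [Module A X] [IsScalarTower ℂ A X]
    [TopologicalSpace X] [IsTopologicalAddGroup X] [ContinuousSMul ℂ X]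
    (hX₁ : ∀ a : A, Continuous fun v : X => a • v)
    (hX₂ : ∀ v : X, Continuous fun a : A => a • v)
    (x : X) (n : ℕ) (p : Seminorm ℂ X) (hp : Continuous fun v => p v) :
    UpperSemicontinuous (fun t : characterSpace ℂ A =>
      ⨅ y : ↥(Submodule.span ℂ {w : X | ∃ (a : Fin (n + 1) → A) (v : X),
          (∀ i, t (a i) = 0) ∧ w = (List.ofFn a).prod • v}),
        p (x + (y : X))) :=
  stmt6_general hA₂ hX₂ x n p hp
end

section
/- Let A be a topological algebra over ℂ. Fix x ∈ A and a continuous seminorm p : A → ℝ. For a continuous unital ℂ-algebra homomorphism t : A → ℂ let I_t = ker t and let I_t² denote the linear span of { a·b : a, b ∈ I_t }. Then the function t ↦ inf { p(x − t(x)·1 + z) : z ∈ I_t² }, defined on the set of continuous unital ℂ-algebra homomorphisms A → ℂ endowed with the topology of pointwise convergence, is upper semicontinuous. -/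
/-!
Write `π_t a := a - t a • 1` (`kerProj t a`) for the projection of `A` onto `ker t` along
`ℂ • 1`. The products `π_t a * π_t b` are exactly the products of two elements of `ker t`, so
`I_t²` is the range of `l ↦ ∑ l (a, b) • π_t a * π_t b` on finitely supported
`l : A × A →₀ ℂ`. Expanding `π_t a * π_t b = a * b - t b • a - t a • b + (t a * t b) • 1`
shows that, for a fixed `l`, this element is a combination of fixed vectors with coefficients
polynomial in the values of `t`, hence continuous in `t`. So the function in question is an
infimum of continuous functions of `t`.
-/

open WeakDual

namespace WeakDual.CharacterSpace

variable {𝕜 A : Type*} [CommRing 𝕜] [TopologicalSpace 𝕜] [IsTopologicalRing 𝕜]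
  [Ring A] [Algebra 𝕜 A] [TopologicalSpace A]

noncomputable def kerProj (t : characterSpace 𝕜 A) (a : A) : A := a - t a • (1 : A)

@[fun_prop]
lemma eval_continuous (a : A) : Continuous fun t : characterSpace 𝕜 A => t a :=
  (WeakDual.eval_continuous a).comp continuous_subtype_val

variable (t : characterSpace 𝕜 A) (a b : A)

@[simp]
lemma apply_kerProj [NoZeroDivisors 𝕜] : t (kerProj t a) = 0 := by
  simp [kerProj]

lemma kerProj_of_apply_eq_zero {a : A} (ha : t a = 0) : kerProj t a = a := by
  simp [kerProj, ha]

lemma kerProj_mul_kerProj :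
    kerProj t a * kerProj t b = a * b - t b • a - t a • b + (t a * t b) • (1 : A) := by
  simp only [kerProj, mul_sub, sub_mul, mul_smul_comm, smul_mul_assoc, smul_sub, smul_smul,
    mul_one, one_mul, mul_comm (t b) (t a)]
  abel

lemma range_kerProj_mul_kerProj [NoZeroDivisors 𝕜] :
    Set.range (fun q : A × A => kerProj t q.1 * kerProj t q.2) =
      {w : A | ∃ a b : A, t a = 0 ∧ t b = 0 ∧ w = a * b} := by
  ext w
  constructor
  · rintro ⟨⟨a, b⟩, rfl⟩
    exact ⟨_, _, apply_kerProj t a, apply_kerProj t b, rfl⟩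
  · rintro ⟨a, b, ha, hb, rfl⟩
    exact ⟨(a, b), by simp only [kerProj_of_apply_eq_zero t ha, kerProj_of_apply_eq_zero t hb]⟩

lemma span_mul_ker_eq_range [NoZeroDivisors 𝕜] :
    Submodule.span 𝕜 {w : A | ∃ a b : A, t a = 0 ∧ t b = 0 ∧ w = a * b} =
      LinearMap.range
        (Finsupp.linearCombination 𝕜 fun q : A × A => kerProj t q.1 * kerProj t q.2) := by
  rw [Finsupp.range_linearCombination, range_kerProj_mul_kerProj]

variable [IsTopologicalAddGroup A] [ContinuousSMul 𝕜 A]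

lemma continuous_kerProj : Continuous fun t : characterSpace 𝕜 A => kerProj t a := by
  unfold kerProj
  fun_prop

lemma continuous_kerProj_mul_kerProj :
    Continuous fun t : characterSpace 𝕜 A => kerProj t a * kerProj t b := by
  simp only [kerProj_mul_kerProj]
  fun_prop

lemma continuous_linearCombination_kerProj_mul_kerProj (l : A × A →₀ 𝕜) :
    Continuous fun t : characterSpace 𝕜 A =>
      Finsupp.linearCombination 𝕜 (fun q : A × A => kerProj t q.1 * kerProj t q.2) l := by
  simp only [Finsupp.linearCombination_apply, Finsupp.sum]
  exact continuous_finsetSum _ fun q _ =>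
    continuous_const.smul (continuous_kerProj_mul_kerProj q.1 q.2)

end WeakDual.CharacterSpace

open WeakDual.CharacterSpace in
theorem stmt7_general {A : Type*} [Ring A] [Algebra ℂ A] [TopologicalSpace A]
    [IsTopologicalAddGroup A] [ContinuousSMul ℂ A]
    (x : A) (p : Seminorm ℂ A) (hp : Continuous fun v => p v) :
    UpperSemicontinuous (fun t : characterSpace ℂ A =>
      ⨅ z : ↥(Submodule.span ℂ {w : A | ∃ a b : A, t a = 0 ∧ t b = 0 ∧ w = a * b}),
        p (x - t x • (1 : A) + (z : A))) := by
  have hinf : ∀ t : characterSpace ℂ A,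
      ⨅ z : ↥(Submodule.span ℂ {w : A | ∃ a b : A, t a = 0 ∧ t b = 0 ∧ w = a * b}),
        p (x - t x • (1 : A) + (z : A)) =
      ⨅ l : A × A →₀ ℂ, p (x - t x • (1 : A) +
        Finsupp.linearCombination ℂ (fun q : A × A => kerProj t q.1 * kerProj t q.2) l) := by
    intro t
    rw [span_mul_ker_eq_range]
    exact iInf_range' (fun z => p (x - t x • (1 : A) + z)) _
  simp only [hinf]
  refine upperSemicontinuous_ciInf (fun t => ⟨0, ?_⟩) fun l => ?_
  · rintro _ ⟨l, rfl⟩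
    exact apply_nonneg p _
  · exact (hp.comp ((continuous_kerProj x).add
      (continuous_linearCombination_kerProj_mul_kerProj l))).upperSemicontinuous

/-- Let `A` be a topological algebra over ℂ, `x ∈ A` and `p` a
continuous seminorm on `A`. The function `t ↦ inf { p(x − t(x)·1 + z) : z ∈ I_t² }`
is upper semicontinuous on the character space of `A` (with the topology of pointwise
convergence), where `I_t = ker t` and `I_t²` is the linear span of
`{ a·b : a, b ∈ I_t }`. -/
theorem stmt7 {A : Type*} [Ring A] [Algebra ℂ A] [TopologicalSpace A]
    [IsTopologicalAddGroup A] [ContinuousSMul ℂ A]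
    (hA₁ : ∀ a : A, Continuous fun y => a * y)
    (hA₂ : ∀ a : A, Continuous fun y => y * a)
    (x : A) (p : Seminorm ℂ A) (hp : Continuous fun v => p v) :
    UpperSemicontinuous (fun t : characterSpace ℂ A =>
      ⨅ z : ↥(Submodule.span ℂ {w : A | ∃ a b : A, t a = 0 ∧ t b = 0 ∧ w = a * b}),
        p (x - t x • (1 : A) + (z : A))) :=
  stmt7_general x p hp
end

section
/- Let A be a unital ℂ-algebra and let X, Y be left A-modules that are topological ℂ-vector spaces with separately continuous A-actions. Let D : X → Y be a continuous ℂ-linear map that is a differential operator of order at most n, i.e. for all a₀, …, a_n ∈ A the iterated commutator [...[D, a₀], …, a_n] vanishes, where [D, a](x) = D(a • x) − a • D(x). Then for every left ideal I of A, D maps the closure of I^{n+1}·X into the closure of I·Y, where I^{n+1}·X is the linear span of { (a₁⋯a_{n+1}) • v : aᵢ ∈ I, v ∈ X } and I·Y is the linear span of { a • w : a ∈ I, w ∈ Y }. -/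
/-! Peeling off the first factor, `D ((a * b) • v) = [D, a] (b • v) + a • D (b • v)`: the second
term lies in `I·Y`, and the first is handled by induction, since `[D, a]` is of order one less.
The inclusion of spans then follows by linearity, and that of closures by continuity. -/

/-- The commutator `[D, a](x) = D(a • x) − a • D(x)` of a map `D : X → Y` of
`A`-modules with an element `a : A`. -/
def brkt {A X Y : Type*} [SMul A X] [SMul A Y] [Sub Y] (D : X → Y) (a : A) : X → Y :=
  fun x => D (a • x) - a • D x

section Commutator

variable {R A X Y : Type*} [Monoid A] [MulAction A X] [AddCommGroup Y] [SMul A Y]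

theorem apply_mul_smul_eq_brkt_add (D : X → Y) (a b : A) (v : X) :
    D ((a * b) • v) = brkt D a (b • v) + a • D (b • v) := by
  rw [brkt, mul_smul, sub_add_cancel]

theorem apply_prod_smul_mem_span_of_foldl_brkt_eq_zero [Semiring R] [Module R Y] (S : Set A)
    (l : List A) (hl : ∀ a ∈ l, a ∈ S) (D : X → Y) (hD : l.foldl brkt D = 0) (v : X) :
    D (l.prod • v) ∈ Submodule.span R {w : Y | ∃ a ∈ S, ∃ u : Y, w = a • u} := by
  induction l generalizing D with
  | nil =>
    rw [List.foldl_nil] at hD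
    rw [hD, Pi.zero_apply]
    exact Submodule.zero_mem _
  | cons a l ih =>
    rw [List.prod_cons, apply_mul_smul_eq_brkt_add D]
    exact Submodule.add_mem _
      (ih (fun b hb => hl b (List.mem_cons_of_mem a hb)) (brkt D a) hD)
      (Submodule.subset_span ⟨a, hl a List.mem_cons_self, _, rfl⟩)

end Commutator

theorem stmt8_general {A X Y : Type*} [Ring A]
    [AddCommGroup X] [Module ℂ X] [Module A X] [TopologicalSpace X]
    [AddCommGroup Y] [Module ℂ Y] [Module A Y] [TopologicalSpace Y]
    (D : X → Y) (hDc : Continuous D)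
    (hDadd : ∀ x y, D (x + y) = D x + D y)
    (hDsmul : ∀ (c : ℂ) (x : X), D (c • x) = c • D x)
    (n : ℕ)
    (hdiff : ∀ l : List A, l.length = n + 1 → l.foldl brkt D = 0)
    (I : Ideal A) :
    D '' closure (Submodule.span ℂ {w : X | ∃ (a : Fin (n + 1) → A) (v : X),
        (∀ i, a i ∈ I) ∧ w = (List.ofFn a).prod • v} : Set X) ⊆
      closure (Submodule.span ℂ {w : Y | ∃ a ∈ I, ∃ u : Y, w = a • u} : Set Y) := by
  let L : X →ₗ[ℂ] Y := { toFun := D, map_add' := hDadd, map_smul' := hDsmul }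
  have hspan : Submodule.span ℂ {w : X | ∃ (a : Fin (n + 1) → A) (v : X),
      (∀ i, a i ∈ I) ∧ w = (List.ofFn a).prod • v} ≤
        (Submodule.span ℂ {w : Y | ∃ a ∈ I, ∃ u : Y, w = a • u}).comap L := by
    refine Submodule.span_le.mpr ?_
    rintro _ ⟨a, v, ha, rfl⟩
    exact apply_prod_smul_mem_span_of_foldl_brkt_eq_zero (I : Set A) _
      (List.forall_mem_ofFn_iff.mpr ha) D (hdiff _ List.length_ofFn) v
  rintro _ ⟨x, hx, rfl⟩
  exact map_mem_closure hDc hx hspan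

/-- Let `A` be a unital ℂ-algebra and `X`, `Y` left `A`-modules that
are topological ℂ-vector spaces with separately continuous `A`-actions. If the
continuous ℂ-linear map `D : X → Y` is a differential operator of order at most `n`
(all iterated commutators with `n+1` elements of `A` vanish), then for every left
ideal `I` of `A`, `D` maps the closure of `I^{n+1}·X` into the closure of `I·Y`. -/
theorem stmt8 {A X Y : Type*} [Ring A] [Algebra ℂ A] [TopologicalSpace A]
    [AddCommGroup X] [Module ℂ X] [Module A X] [IsScalarTower ℂ A X]
    [TopologicalSpace X] [IsTopologicalAddGroup X] [ContinuousSMul ℂ X]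
    [AddCommGroup Y] [Module ℂ Y] [Module A Y] [IsScalarTower ℂ A Y]
    [TopologicalSpace Y] [IsTopologicalAddGroup Y] [ContinuousSMul ℂ Y]
    (hX₁ : ∀ a : A, Continuous fun v : X => a • v)
    (hX₂ : ∀ v : X, Continuous fun a : A => a • v)
    (hY₁ : ∀ a : A, Continuous fun w : Y => a • w)
    (hY₂ : ∀ w : Y, Continuous fun a : A => a • w)
    (D : X → Y) (hDc : Continuous D)
    (hDadd : ∀ x y, D (x + y) = D x + D y)
    (hDsmul : ∀ (c : ℂ) (x : X), D (c • x) = c • D x)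
    (n : ℕ)
    (hdiff : ∀ l : List A, l.length = n + 1 → l.foldl brkt D = 0)
    (I : Ideal A) :
    D '' closure (Submodule.span ℂ {w : X | ∃ (a : Fin (n + 1) → A) (v : X),
        (∀ i, a i ∈ I) ∧ w = (List.ofFn a).prod • v} : Set X) ⊆
      closure (Submodule.span ℂ {w : Y | ∃ a ∈ I, ∃ u : Y, w = a • u} : Set Y) :=
  stmt8_general D hDc hDadd hDsmul n hdiff I
end

section
/- Let A and B be unital ℂ-algebras and φ : A → B a unital algebra homomorphism. Let q ≥ 1 and p ≥ 0 be natural numbers. If b ∈ Z^q(φ) (all q-fold iterated ring commutators [...[b, φ(a₁)], …, φ(a_q)] vanish for a₁,…,a_q ∈ A) and P : A → B is a ℂ-linear map belonging to Diff^p(φ) (all iterated commutators [...[P, a₀], …, a_p] vanish for a₀,…,a_p ∈ A), then the map x ↦ b·P(x) belongs to Diff^{q+p−1}(φ). -/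
def opbrkt {A B : Type*} [Mul A] [Mul B] [Sub B] (φ : A → B) (P : A → B) (a : A) :
    A → B := fun x => P (a * x) - φ a * P x

def ringbrkt {B : Type*} [Mul B] [Sub B] (b c : B) : B := b * c - c * b

/-! The Leibniz rule `[b·P, a] = b·[P, a] + [b, φ a]·P` lowers either the order of
`P` or the order of `b` by one, so induction on the number of commutators gives the bound. -/

section HigherCentralizer

variable {A B : Type*} [NonUnitalRing B] (φ : A → B)

/-- The paper's `Z^q(φ)`. -/
def higherCentralizer (q : ℕ) : Set B :=
  {b | ∀ l : List A, l.length = q → (l.map φ).foldl ringbrkt b = 0}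

variable {φ}

theorem ringbrkt_mem_higherCentralizer {q : ℕ} {b : B} (hb : b ∈ higherCentralizer φ (q + 1))
    (a : A) : ringbrkt b (φ a) ∈ higherCentralizer φ q := fun l hl =>
  hb (a :: l) (by simp [hl])

theorem eq_zero_of_mem_higherCentralizer_zero {b : B} (hb : b ∈ higherCentralizer φ 0) :
    b = 0 :=
  hb [] rfl

end HigherCentralizer

section DiffOps

variable {A B : Type*} [Mul A] [NonUnitalRing B] (φ : A → B)

/-- The paper's `Diff^n(φ)`. -/
def diffOps (n : ℕ) : Set (A → B) :=
  {P | ∀ l : List A, l.length = n + 1 → l.foldl (opbrkt φ) P = 0}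

variable {φ}

theorem foldl_opbrkt_zero (l : List A) : l.foldl (opbrkt φ) 0 = 0 := by
  induction l with
  | nil => rfl
  | cons a l ih =>
    rw [List.foldl_cons, show opbrkt φ 0 a = 0 by funext x; simp [opbrkt], ih]

theorem foldl_opbrkt_add (l : List A) (Q R : A → B) :
    l.foldl (opbrkt φ) (Q + R) = l.foldl (opbrkt φ) Q + l.foldl (opbrkt φ) R := by
  induction l generalizing Q R with
  | nil => rfl
  | cons a l ih =>
    have : opbrkt φ (Q + R) a = opbrkt φ Q a + opbrkt φ R a := by
      funext x; simp only [opbrkt, Pi.add_apply, mul_add]; abel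
    simp only [List.foldl_cons, this, ih]

theorem opbrkt_mul_left (b : B) (P : A → B) (a : A) :
    opbrkt φ (fun x => b * P x) a =
      (fun x => b * opbrkt φ P a x) + fun x => ringbrkt b (φ a) * P x := by
  funext x
  simp only [opbrkt, ringbrkt, Pi.add_apply, mul_sub, sub_mul, mul_assoc]
  abel

theorem opbrkt_eq_zero_of_mem_diffOps_zero {P : A → B} (hP : P ∈ diffOps φ 0) (a : A) :
    opbrkt φ P a = 0 :=
  hP [a] rfl

theorem opbrkt_mem_diffOps {p : ℕ} {P : A → B} (hP : P ∈ diffOps φ (p + 1)) (a : A) :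
    opbrkt φ P a ∈ diffOps φ p := fun l hl =>
  hP (a :: l) (by simp [hl])

theorem mul_mem_diffOps {q p : ℕ} {b : B} {P : A → B} (hb : b ∈ higherCentralizer φ (q + 1))
    (hP : P ∈ diffOps φ p) : (fun x => b * P x) ∈ diffOps φ (q + p) := by
  intro l hl
  induction l generalizing q p b P with
  | nil => simp at hl
  | cons a l ih =>
    have hl' : l.length = q + p := by simpa using hl
    rw [List.foldl_cons, opbrkt_mul_left, foldl_opbrkt_add]
    have hleft : l.foldl (opbrkt φ) (fun x => b * opbrkt φ P a x) = 0 := by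
      cases p with
      | zero => simp [opbrkt_eq_zero_of_mem_diffOps_zero hP, ← Pi.zero_def, foldl_opbrkt_zero]
      | succ p => exact ih hb (opbrkt_mem_diffOps hP a) (by omega)
    have hright : l.foldl (opbrkt φ) (fun x => ringbrkt b (φ a) * P x) = 0 := by
      cases q with
      | zero =>
        simp [eq_zero_of_mem_higherCentralizer_zero (ringbrkt_mem_higherCentralizer hb a),
          ← Pi.zero_def, foldl_opbrkt_zero]
      | succ q => exact ih (ringbrkt_mem_higherCentralizer hb a) hP (by omega)
    rw [hleft, hright, add_zero]

end DiffOps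

theorem stmt9_general {A B : Type*} [Ring A] [Algebra ℂ A] [Ring B] [Algebra ℂ B]
    (φ : A →ₐ[ℂ] B) (q p : ℕ) (hq : 1 ≤ q) (b : B)
    (hb : ∀ l : List A, l.length = q → (l.map ⇑φ).foldl ringbrkt b = 0)
    (P : A → B)
    (hP : ∀ l : List A, l.length = p + 1 → l.foldl (opbrkt ⇑φ) P = 0) :
    ∀ l : List A, l.length = (q + p - 1) + 1 →
      l.foldl (opbrkt ⇑φ) (fun x => b * P x) = 0 := by
  obtain ⟨q, rfl⟩ := Nat.exists_eq_add_of_le' hq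
  intro l hl
  exact mul_mem_diffOps (φ := ⇑φ) hb hP l (by omega)

/-- Let `φ : A → B` be a unital homomorphism of unital ℂ-algebras,
`q ≥ 1` and `p ≥ 0`. If `b ∈ Z^q(φ)` (all `q`-fold iterated ring commutators of `b`
with elements `φ(aᵢ)` vanish) and the ℂ-linear map `P : A → B` lies in `Diff^p(φ)`
(all iterated commutators with `p+1` elements of `A` vanish), then
`x ↦ b·P(x)` lies in `Diff^{q+p−1}(φ)`. -/
theorem stmt9 {A B : Type*} [Ring A] [Algebra ℂ A] [Ring B] [Algebra ℂ B]
    (φ : A →ₐ[ℂ] B) (q p : ℕ) (hq : 1 ≤ q) (b : B)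
    (hb : ∀ l : List A, l.length = q → (l.map ⇑φ).foldl ringbrkt b = 0)
    (P : A → B)
    (hPadd : ∀ x y, P (x + y) = P x + P y)
    (hPsmul : ∀ (c : ℂ) (x : A), P (c • x) = c • P x)
    (hP : ∀ l : List A, l.length = p + 1 → l.foldl (opbrkt ⇑φ) P = 0) :
    ∀ l : List A, l.length = (q + p - 1) + 1 →
      l.foldl (opbrkt ⇑φ) (fun x => b * P x) = 0 :=
  stmt9_general φ q p hq b hb P hP
end

section
/- Let A and B be unital ℂ-algebras, φ : A → B a unital algebra homomorphism, b ∈ B, and n a natural number. Then the map x ↦ b·φ(x) belongs to Diff^n(φ) if and only if b ∈ Z^{n+1}(φ); that is, for all a₀, …, a_n ∈ A the iterated commutator [...[b·φ, a₀], …, a_n] is the zero map if and only if for all a₀, …, a_n ∈ A the iterated ring commutator [...[b, φ(a₀)], …, φ(a_n)] = 0. -/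
section

variable {A B F : Type*} [FunLike F A B]

lemma opbrkt_mul_map [Mul A] [NonUnitalRing B] [MulHomClass F A B] (φ : F) (b : B) (a : A) :
    opbrkt φ (fun x => b * φ x) a = fun x => ringbrkt b (φ a) * φ x := by
  funext x
  simp only [opbrkt, ringbrkt, map_mul, sub_mul, mul_assoc]

lemma foldl_opbrkt_mul_map [Mul A] [NonUnitalRing B] [MulHomClass F A B] (φ : F)
    (l : List A) (b : B) :
    l.foldl (opbrkt φ) (fun x => b * φ x) = fun x => (l.map φ).foldl ringbrkt b * φ x := by
  induction l generalizing b with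
  | nil => rfl
  | cons a l ih => simp only [List.foldl_cons, List.map_cons, opbrkt_mul_map, ih]

lemma mul_map_eq_zero_iff [MulOneClass A] [MulZeroOneClass B] [MonoidHomClass F A B] (φ : F)
    (c : B) : (fun x => c * φ x) = 0 ↔ c = 0 := by
  refine ⟨fun h => ?_, fun hc => by subst hc; funext x; exact zero_mul _⟩
  simpa using congrFun h 1

end

/-- Let `φ : A → B` be a unital homomorphism of unital ℂ-algebras,
`b ∈ B` and `n ∈ ℕ`. Then `x ↦ b·φ(x)` lies in `Diff^n(φ)` iff `b ∈ Z^{n+1}(φ)`: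
all iterated commutators `[...[b·φ, a₀], …, a_n]` vanish iff all iterated ring
commutators `[...[b, φ(a₀)], …, φ(a_n)]` vanish. -/
theorem stmt10 {A B : Type*} [Ring A] [Algebra ℂ A] [Ring B] [Algebra ℂ B]
    (φ : A →ₐ[ℂ] B) (b : B) (n : ℕ) :
    (∀ l : List A, l.length = n + 1 →
      l.foldl (opbrkt ⇑φ) (fun x => b * φ x) = 0) ↔
    (∀ l : List A, l.length = n + 1 → (l.map ⇑φ).foldl ringbrkt b = 0) := by
  simp only [foldl_opbrkt_mul_map, mul_map_eq_zero_iff]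
end

section
/- Let A be a star ℂ-algebra, B a unital C*-algebra, and φ : A → B a star algebra homomorphism. Then the sequence of subspaces Z^n(φ) stabilizes from n = 1: for every n ≥ 1, Z^n(φ) = Z^{n+1}(φ). Equivalently, for every b ∈ B and n ≥ 1, all n-fold iterated commutators [...[b, φ(a₁)], …, φ(a_n)] with a₁, …, a_n ∈ A vanish if and only if all (n+1)-fold iterated commutators with n+1 elements vanish. -/
open NormedSpace

theorem ringbrkt_eq_zero_iff_commute {R : Type*} [Ring R] {b c : R} :
    ringbrkt b c = 0 ↔ Commute b c :=
  sub_eq_zero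

theorem ringbrkt_smul_right {R A : Type*} [CommSemiring R] [Ring A] [Algebra R A] (r : R)
    (b x : A) : ringbrkt b (r • x) = r • ringbrkt b x := by
  simp only [ringbrkt, mul_smul_comm, smul_mul_assoc, smul_sub]

theorem exp_neg_mul_mul_exp_of_commute_ringbrkt {𝕂 𝔸 : Type*} [RCLike 𝕂] [NormedRing 𝔸]
    [NormedAlgebra 𝕂 𝔸] [CompleteSpace 𝔸] {b x : 𝔸} (h : Commute x (ringbrkt b x)) :
    exp (-x) * b * exp x = b + ringbrkt b x := by
  set c := ringbrkt b x
  let f : 𝕂 → 𝔸 := fun t => exp (t • -x) * b * exp (t • x) - t • c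
  have hf (t : 𝕂) : HasDerivAt f 0 t := by
    have hc : Commute c (exp (t • x)) := (h.symm.smul_right t).exp_right
    have hinv : exp (t • -x) * exp (t • x) = 1 := by
      let _ : NormedAlgebra ℚ 𝔸 := .restrictScalars ℚ 𝕂 𝔸
      rw [smul_neg, ← exp_add_of_commute (Commute.refl (t • x)).neg_left, neg_add_cancel,
        exp_zero]
    refine ((((hasDerivAt_exp_smul_const (-x) t).mul_const b).mul
      (hasDerivAt_exp_smul_const' x t)).sub ((hasDerivAt_id t).smul_const c)).congr_deriv ?_
    have hprod : exp (t • -x) * -x * b * exp (t • x) + exp (t • -x) * b * (x * exp (t • x)) =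
        exp (t • -x) * c * exp (t • x) := by
      simp only [c, ringbrkt]
      noncomm_ring
    rw [hprod, mul_assoc, hc.eq, ← mul_assoc, hinv, one_mul, one_smul, sub_self]
  have := is_const_of_deriv_eq_zero (fun t => (hf t).differentiableAt) (fun t => (hf t).deriv) 1 0
  simpa [f, sub_eq_iff_eq_add, add_comm] using this

theorem IsSelfAdjoint.commute_of_commute_ringbrkt {B : Type*} [NormedRing B] [StarRing B]
    [CStarRing B] [NormedAlgebra ℂ B] [CompleteSpace B] [StarModule ℂ B] {b s : B}
    (hs : IsSelfAdjoint s) (h : Commute (ringbrkt b s) s) : Commute b s := by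
  rw [← ringbrkt_eq_zero_iff_commute]
  set c := ringbrkt b s
  have hbound (t : ℝ) : |t| * ‖c‖ ≤ 2 * ‖b‖ := by
    set y : selfAdjoint B := t • ⟨s, hs⟩
    set x : B := Complex.I • (y : B)
    have hy : (y : B) = (t : ℂ) • s := (Complex.coe_smul t s).symm
    have hcomm : Commute x (ringbrkt b x) := by
      simp only [x, hy, ringbrkt_smul_right]
      exact (((h.symm.smul_left _).smul_left _).smul_right _).smul_right _
    have hnorm : ‖b + ringbrkt b x‖ = ‖b‖ := by
      rw [← exp_neg_mul_mul_exp_of_commute_ringbrkt (𝕂 := ℂ) hcomm, ← smul_neg,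
        ← selfAdjoint.expUnitary_coe, ← NegMemClass.coe_neg, ← selfAdjoint.expUnitary_coe,
        CStarRing.norm_mul_coe_unitary, CStarRing.norm_coe_unitary_mul]
    have hc : ‖ringbrkt b x‖ = |t| * ‖c‖ := by
      simp [x, hy, ringbrkt_smul_right, norm_smul, c]
    calc |t| * ‖c‖ = ‖(b + ringbrkt b x) - b‖ := by rw [add_sub_cancel_left, hc]
      _ ≤ ‖b + ringbrkt b x‖ + ‖b‖ := norm_sub_le _ _
      _ = 2 * ‖b‖ := by rw [hnorm, two_mul]
  by_contra hc
  have hcpos : 0 < ‖c‖ := norm_pos_iff.mpr hc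
  have := hbound ((2 * ‖b‖ + 1) / ‖c‖)
  rw [abs_of_nonneg (by positivity), div_mul_cancel₀ _ hcpos.ne'] at this
  linarith

theorem StarAlgHom.commute_apply_of_commute_ringbrkt {A B : Type*} [Ring A] [Algebra ℂ A]
    [StarRing A] [StarModule ℂ A] [NormedRing B] [StarRing B] [CStarRing B] [NormedAlgebra ℂ B]
    [CompleteSpace B] [StarModule ℂ B] (φ : A →⋆ₐ[ℂ] B) {c : B}
    (h : ∀ a, Commute (ringbrkt c (φ a)) (φ a)) (a : A) : Commute c (φ a) := by
  have hsa (x : selfAdjoint A) : Commute c (φ x) :=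
    (x.prop.map φ).commute_of_commute_ringbrkt (h x)
  rw [← realPart_add_I_smul_imaginaryPart a, map_add, map_smul]
  exact (hsa _).add_right ((hsa _).smul_right Complex.I)

theorem forall_length_eq_add_one_iff {α : Type*} {P : List α → Prop} {n : ℕ} :
    (∀ l : List α, l.length = n + 1 → P l) ↔ ∀ l : List α, l.length = n → ∀ a, P (l ++ [a]) := by
  refine ⟨fun h l hl a => h _ (by simp [hl]), fun h l hl => ?_⟩
  obtain ⟨l, a, rfl⟩ := (List.eq_nil_or_concat' l).resolve_left (by rintro rfl; simp at hl)
  exact h l (by simpa using hl) a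

/-- Let `A` be a star ℂ-algebra, `B` a unital C*-algebra, and
`φ : A → B` a star algebra homomorphism. Then the sequence `Z^n(φ)` stabilizes from
`n = 1`: for `b ∈ B` and `n ≥ 1`, all `n`-fold iterated commutators of `b` with
elements `φ(aᵢ)` vanish iff all `(n+1)`-fold iterated commutators vanish. -/
theorem stmt12 {A B : Type*} [Ring A] [Algebra ℂ A] [StarRing A] [StarModule ℂ A]
    [NormedRing B] [StarRing B] [CStarRing B] [NormedAlgebra ℂ B] [CompleteSpace B]
    [StarModule ℂ B]
    (φ : A →⋆ₐ[ℂ] B) (b : B) (n : ℕ) (hn : 1 ≤ n) :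
    (∀ l : List A, l.length = n → (l.map ⇑φ).foldl ringbrkt b = 0) ↔
    (∀ l : List A, l.length = n + 1 → (l.map ⇑φ).foldl ringbrkt b = 0) := by
  obtain ⟨m, rfl⟩ := Nat.exists_eq_add_of_le' hn
  simp only [forall_length_eq_add_one_iff, List.map_append, List.map_cons, List.map_nil,
    List.foldl_append, List.foldl_cons, List.foldl_nil, ringbrkt_eq_zero_iff_commute]
  refine forall₂_congr fun l _ => ⟨fun h a₁ a₂ => ?_,
    fun h => φ.commute_apply_of_commute_ringbrkt fun a => h a a⟩
  rw [ringbrkt_eq_zero_iff_commute.2 (h a₁)]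
  exact Commute.zero_left _
end

section
/- Let x : ℝ → ℂ be an infinitely differentiable function all of whose derivatives vanish at 0, including the value itself: x⁽ⁿ⁾(0) = 0 for all n ≥ 0. Then x can be approximated, in the topology of uniform convergence on compact sets of each derivative, by smooth functions vanishing on a neighbourhood of 0; precisely, for every n ∈ ℕ, every T > 0 and every ε > 0 there exists an infinitely differentiable function y : ℝ → ℂ that is identically zero on some open neighbourhood of 0 and satisfies |x⁽ᵏ⁾(t) − y⁽ᵏ⁾(t)| < ε for all 0 ≤ k ≤ n and all t with |t| ≤ T. -/
/-!
Multiply `x` by the rescaled bump `χ_δ(t) = φ(t / δ)`, where `φ = 1` on `[-1, 1]` and `φ = 0`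
outside `[-2, 2]`, and take `y = x - χ_δ x`. Then `x⁽ᵏ⁾ - y⁽ᵏ⁾ = (χ_δ x)⁽ᵏ⁾`, which vanishes for
`|t| ≥ 2δ`. For `|t| ≤ 2δ`, Leibniz' rule bounds it by a sum of terms `δ⁻ⁱ ‖φ⁽ⁱ⁾‖ ‖x⁽ᵏ⁻ⁱ⁾(t)‖`,
and since `x` is flat at `0`, the mean value inequality applied `i + 1` times gives
`‖x⁽ᵏ⁻ⁱ⁾(t)‖ ≤ B |t|ⁱ⁺¹ ≤ B (2δ)ⁱ⁺¹` with `B` a bound for `x⁽ᵏ⁺¹⁾` near `0`. Hence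
`(χ_δ x)⁽ᵏ⁾ = O(δ)` uniformly on `ℝ`.
-/

open Set Metric Filter Topology
open scoped ContDiff

section IteratedDeriv

variable {𝕜 F : Type*} [NontriviallyNormedField 𝕜] [NormedAddCommGroup F] [NormedSpace 𝕜 F]

theorem iteratedDeriv_eq_zero_of_notMem_tsupport {f : 𝕜 → F} (i : ℕ) {u : 𝕜}
    (hu : u ∉ tsupport f) : iteratedDeriv i f u = 0 := by
  rw [iteratedDeriv_eq_iteratedFDeriv,
    Function.notMem_support.mp fun h => hu (support_iteratedFDeriv_subset i h)]
  rfl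

theorem HasCompactSupport.exists_bound_norm_iteratedDeriv {f : 𝕜 → F} {i : ℕ}
    (hf : ContDiff 𝕜 i f) (hc : HasCompactSupport f) : ∃ M, ∀ u, ‖iteratedDeriv i f u‖ ≤ M := by
  obtain ⟨M, hM⟩ := (hc.iteratedFDeriv i).exists_bound_of_continuous
    (hf.continuous_iteratedFDeriv le_rfl)
  exact ⟨M, fun u => norm_iteratedFDeriv_eq_norm_iteratedDeriv (f := f) ▸ hM u⟩

theorem norm_iteratedDeriv_comp_mul_le {f : 𝕜 → F} {i : ℕ} (hf : ContDiff 𝕜 i f) {M : ℝ}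
    (hM : ∀ u, ‖iteratedDeriv i f u‖ ≤ M) (c t : 𝕜) :
    ‖iteratedDeriv i (fun s => f (c * s)) t‖ ≤ ‖c‖ ^ i * M := by
  rw [iteratedDeriv_comp_const_smul hf, norm_smul, norm_pow]
  gcongr
  exact hM _

theorem norm_iteratedDeriv_smul_le {g : 𝕜 → 𝕜} {f : 𝕜 → F} {N : WithTop ℕ∞}
    (hg : ContDiff 𝕜 N g) (hf : ContDiff 𝕜 N f) (t : 𝕜) {k : ℕ} (hk : k ≤ N) :
    ‖iteratedDeriv k (fun s => g s • f s) t‖ ≤ ∑ i ∈ Finset.range (k + 1),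
      (k.choose i : ℝ) * ‖iteratedDeriv i g t‖ * ‖iteratedDeriv (k - i) f t‖ := by
  simpa only [norm_iteratedFDeriv_eq_norm_iteratedDeriv] using
    norm_iteratedFDeriv_smul_le hg hf t hk

end IteratedDeriv

variable {E : Type*} [NormedAddCommGroup E] [NormedSpace ℝ E]

theorem norm_iteratedDeriv_le_mul_norm_pow_of_flat {f : ℝ → E} {N : ℕ}
    (hf : ContDiff ℝ N f) (hflat : ∀ j < N, iteratedDeriv j f 0 = 0) {r B : ℝ}
    (hB : ∀ s ∈ closedBall (0 : ℝ) r, ‖iteratedDeriv N f s‖ ≤ B) {m : ℕ} (hm : m ≤ N) {t : ℝ}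
    (ht : t ∈ closedBall (0 : ℝ) r) :
    ‖iteratedDeriv m f t‖ ≤ B * ‖t‖ ^ (N - m) := by
  have hB0 : 0 ≤ B := (norm_nonneg _).trans
    (hB 0 (mem_closedBall_self (dist_nonneg.trans (mem_closedBall.mp ht))))
  suffices H : ∀ p m, m + p = N → ∀ t ∈ closedBall (0 : ℝ) r,
      ‖iteratedDeriv m f t‖ ≤ B * ‖t‖ ^ p from H (N - m) m (by omega) t ht
  intro p
  induction p with
  | zero =>
    rintro m rfl t ht
    simpa using hB t ht
  | succ p ih =>
    rintro m hmp t ht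
    have hdiff : Differentiable ℝ (iteratedDeriv m f) :=
      hf.differentiable_iteratedDeriv m (by exact_mod_cast (show m < N by omega))
    have hderiv : ∀ s ∈ closedBall (0 : ℝ) ‖t‖, ‖deriv (iteratedDeriv m f) s‖ ≤ B * ‖t‖ ^ p := by
      intro s hs
      rw [← iteratedDeriv_succ]
      have hst : ‖s‖ ≤ ‖t‖ := mem_closedBall_zero_iff.mp hs
      calc ‖iteratedDeriv (m + 1) f s‖ ≤ B * ‖s‖ ^ p :=
            ih (m + 1) (by omega) s (closedBall_subset_closedBall
              (mem_closedBall_zero_iff.mp ht) hs)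
        _ ≤ B * ‖t‖ ^ p := by gcongr
    have hmvt := (convex_closedBall (0 : ℝ) ‖t‖).norm_image_sub_le_of_norm_deriv_le
      (fun s _ => hdiff s) hderiv (mem_closedBall_self (norm_nonneg t))
      (mem_closedBall_zero_iff.mpr le_rfl)
    rw [hflat m (by omega), sub_zero, sub_zero] at hmvt
    calc ‖iteratedDeriv m f t‖ ≤ B * ‖t‖ ^ p * ‖t‖ := hmvt
      _ = B * ‖t‖ ^ (p + 1) := by ring

section Cutoff

variable {φ : ℝ → ℝ} {R : ℝ}

theorem iteratedDeriv_comp_inv_mul_eq_zero {i : ℕ} (hφ : ContDiff ℝ i φ)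
    (hR : tsupport φ ⊆ closedBall 0 R) {δ : ℝ} (hδ : 0 < δ) {t : ℝ} (ht : R * δ < |t|) :
    iteratedDeriv i (fun s => φ (δ⁻¹ * s)) t = 0 := by
  rw [iteratedDeriv_comp_const_mul hφ]
  refine mul_eq_zero_of_right _ (iteratedDeriv_eq_zero_of_notMem_tsupport i fun h => ?_)
  have hle := mem_closedBall_zero_iff.mp (hR h)
  rw [norm_mul, norm_inv, Real.norm_eq_abs, Real.norm_eq_abs, abs_of_pos hδ,
    inv_mul_le_iff₀ hδ] at hle
  linarith

theorem exists_norm_iteratedDeriv_cutoff_smul_le (hφ : ContDiff ℝ ∞ φ) (hR0 : 0 ≤ R)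
    (hR : tsupport φ ⊆ closedBall 0 R) {f : ℝ → E} {k : ℕ} (hf : ContDiff ℝ (k + 1) f)
    (hflat : ∀ j ≤ k, iteratedDeriv j f 0 = 0) :
    ∃ C, ∀ δ, 0 < δ → R * δ ≤ 1 → ∀ t,
      ‖iteratedDeriv k (fun s => φ (δ⁻¹ * s) • f s) t‖ ≤ C * δ := by
  have hφi : ∀ i : ℕ, ContDiff ℝ i φ := fun i => hφ.of_le (by exact_mod_cast le_top)
  have hc : HasCompactSupport φ :=
    (isCompact_closedBall 0 R).of_isClosed_subset (isClosed_tsupport φ) hR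
  choose M hM using fun i => hc.exists_bound_norm_iteratedDeriv (hφi i)
  have hM0 : ∀ i, 0 ≤ M i := fun i => (norm_nonneg _).trans (hM i 0)
  obtain ⟨B, hB⟩ := (isCompact_closedBall (0 : ℝ) 1).exists_bound_of_continuousOn
    (hf.continuous_iteratedDeriv (k + 1) le_rfl).continuousOn
  have hB0 : 0 ≤ B := (norm_nonneg _).trans (hB 0 (mem_closedBall_self zero_le_one))
  refine ⟨∑ i ∈ Finset.range (k + 1), k.choose i * (M i * (B * R ^ (i + 1))),
    fun δ hδ hRδ t => ?_⟩
  have hφδ : ContDiff ℝ k fun s => φ (δ⁻¹ * s) := (hφi k).comp (contDiff_const.mul contDiff_id)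
  refine (norm_iteratedDeriv_smul_le hφδ (hf.of_le (by norm_cast; omega)) t le_rfl).trans ?_
  rw [Finset.sum_mul]
  refine Finset.sum_le_sum fun i hi => ?_
  rw [mul_assoc, mul_assoc]
  refine mul_le_mul_of_nonneg_left ?_ (Nat.cast_nonneg _)
  have := hM0 i
  by_cases ht : |t| ≤ R * δ
  · have hik : i ≤ k := Finset.mem_range_succ_iff.mp hi
    have hdecay := norm_iteratedDeriv_le_mul_norm_pow_of_flat (N := k + 1) hf
      (fun j hj => hflat j (by omega)) hB (m := k - i) (by omega)
      (mem_closedBall_zero_iff.mpr (ht.trans hRδ))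
    rw [show k + 1 - (k - i) = i + 1 by omega] at hdecay
    calc ‖iteratedDeriv i (fun s => φ (δ⁻¹ * s)) t‖ * ‖iteratedDeriv (k - i) f t‖
        ≤ (δ⁻¹ ^ i * M i) * (B * ‖t‖ ^ (i + 1)) := by
          refine mul_le_mul ?_ hdecay (norm_nonneg _) (by positivity)
          simpa [abs_of_pos hδ] using norm_iteratedDeriv_comp_mul_le (hφi i) (hM i) δ⁻¹ t
      _ ≤ (δ⁻¹ ^ i * M i) * (B * (R * δ) ^ (i + 1)) := by
          rw [Real.norm_eq_abs]; gcongr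
      _ = M i * (B * R ^ (i + 1)) * δ := by rw [mul_pow, inv_pow]; field_simp; ring
  · rw [iteratedDeriv_comp_inv_mul_eq_zero (hφi i) hR hδ (not_le.mp ht), norm_zero, zero_mul]
    positivity

theorem eventually_norm_iteratedDeriv_cutoff_smul_lt (hφ : ContDiff ℝ ∞ φ) (hR0 : 0 ≤ R)
    (hR : tsupport φ ⊆ closedBall 0 R) {f : ℝ → E} {k : ℕ} (hf : ContDiff ℝ (k + 1) f)
    (hflat : ∀ j ≤ k, iteratedDeriv j f 0 = 0) {ε : ℝ} (hε : 0 < ε) :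
    ∀ᶠ δ in 𝓝[>] 0, ∀ t, ‖iteratedDeriv k (fun s => φ (δ⁻¹ * s) • f s) t‖ < ε := by
  obtain ⟨C, hC⟩ := exists_norm_iteratedDeriv_cutoff_smul_le hφ hR0 hR hf hflat
  have hR1 : ∀ᶠ δ in 𝓝 (0 : ℝ), R * δ < 1 :=
    (continuous_const.mul continuous_id).continuousAt.eventually_lt continuousAt_const (by simp)
  have hCε : ∀ᶠ δ in 𝓝 (0 : ℝ), C * δ < ε :=
    (continuous_const.mul continuous_id).continuousAt.eventually_lt continuousAt_const (by simpa)
  filter_upwards [self_mem_nhdsWithin, nhdsWithin_le_nhds (hR1.and hCε)] with δ hδ hδR t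
  exact (hC δ hδ hδR.1.le t).trans_lt hδR.2

end Cutoff

/-- Let `x : ℝ → ℂ` be a smooth function all of whose derivatives
(including the function itself) vanish at `0`. Then `x` can be approximated, uniformly
on compact sets in each derivative, by smooth functions vanishing on a neighbourhood
of `0`: for all `n`, `T > 0` and `ε > 0` there is a smooth `y : ℝ → ℂ` vanishing on an
open neighbourhood of `0` with `‖x⁽ᵏ⁾(t) − y⁽ᵏ⁾(t)‖ < ε` for all `k ≤ n`, `|t| ≤ T`. -/
theorem stmt19 (x : ℝ → ℂ) (hx : ContDiff ℝ (⊤ : ℕ∞) x)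
    (h0 : ∀ n : ℕ, iteratedDeriv n x 0 = 0) :
    ∀ (n : ℕ) (T ε : ℝ), 0 < T → 0 < ε →
      ∃ y : ℝ → ℂ, ContDiff ℝ (⊤ : ℕ∞) y ∧
        (∃ U : Set ℝ, IsOpen U ∧ (0 : ℝ) ∈ U ∧ ∀ t ∈ U, y t = 0) ∧
        ∀ k ≤ n, ∀ t : ℝ, |t| ≤ T →
          ‖iteratedDeriv k x t - iteratedDeriv k y t‖ < ε := by
  intro n _ ε _ hε
  let φ : ContDiffBump (0 : ℝ) := ⟨1, 2, one_pos, one_lt_two⟩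
  have hsmall : ∀ᶠ δ in 𝓝[>] 0, ∀ k ∈ Finset.range (n + 1), ∀ t,
      ‖iteratedDeriv k (fun s => φ (δ⁻¹ * s) • x s) t‖ < ε :=
    (eventually_all_finset _).2 fun k _ =>
      eventually_norm_iteratedDeriv_cutoff_smul_lt φ.contDiff zero_le_two φ.tsupport_eq.le
        (hx.of_le (by exact_mod_cast le_top)) (fun j _ => h0 j) hε
  obtain ⟨δ, hδε, hδ⟩ := (hsmall.and self_mem_nhdsWithin).exists
  have hz : ContDiff ℝ ∞ fun s => φ (δ⁻¹ * s) • x s :=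
    (φ.contDiff.comp (contDiff_const.mul contDiff_id)).smul hx
  refine ⟨fun s => x s - φ (δ⁻¹ * s) • x s, hx.sub hz,
    ⟨ball 0 δ, isOpen_ball, mem_ball_self hδ, fun t ht => ?_⟩, fun k hk t _ => ?_⟩
  · have hunit : δ⁻¹ * t ∈ closedBall 0 φ.rIn := by
      rw [mem_closedBall_zero_iff, norm_mul, norm_inv, Real.norm_of_nonneg hδ.le,
        inv_mul_le_iff₀ hδ]
      simpa [φ] using (mem_ball_zero_iff.mp ht).le
    simp only [φ.one_of_mem_closedBall hunit, one_smul, sub_self]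
  · rw [iteratedDeriv_fun_sub (hx.contDiffAt.of_le (by exact_mod_cast le_top))
      (hz.contDiffAt.of_le (by exact_mod_cast le_top)), sub_sub_cancel]
    exact hδε k (Finset.mem_range_succ_iff.mpr hk) t
end
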